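/- arXiv:2312.14728 — 4 statements merged into one kernel-verified Lean document; each statement's English description precedes it below -/
import Mathlib

section
/- If G and F are distribution functions on ℝ such that G^{-1}(v) − G^{-1}(u) ≥ F^{-1}(v) − F^{-1}(u) for all 0 < u < v < 1 (G is at least as spread out as F), and both distributions have finite second moments, then the variance of G is at least the variance of F. -/
/-!
The quantile function `F⁻¹` is monotone on `(0, 1)`, so the spread order says that every increment
of `G⁻¹` dominates the corresponding nonnegative increment of `F⁻¹`; in particular `G⁻¹` is monotone
as well, hence measurable. The variance of a square-integrable `X` is half the mean squared
difference of two independent copies, `2 Var[X] = ∫∫ (X v - X u)² du dv`, and the squared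
increments of `F⁻¹` are pointwise at most those of `G⁻¹`.
-/

open MeasureTheory Set Filter ProbabilityTheory

section Variance

variable {Ω : Type*} [MeasurableSpace Ω] {μ : Measure Ω} [IsProbabilityMeasure μ] {X Y : Ω → ℝ}

lemma integral_sub_const_sq (hX : MemLp X 2 μ) (c : ℝ) :
    ∫ ω, (X ω - c) ^ 2 ∂μ = Var[X; μ] + (μ[X] - c) ^ 2 := by
  have hX1 : Integrable X μ := hX.integrable one_le_two
  have hexpand : (fun ω => (X ω - c) ^ 2) = fun ω => X ω ^ 2 - 2 * c * X ω + c ^ 2 := by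
    funext ω; ring
  have hlin : Integrable (fun ω => X ω ^ 2 - 2 * c * X ω) μ :=
    hX.integrable_sq.sub (hX1.const_mul _)
  rw [variance_eq_sub hX, hexpand, integral_add hlin (integrable_const _),
    integral_sub hX.integrable_sq (hX1.const_mul _), integral_const_mul]
  simp only [integral_const, probReal_univ, one_smul, Pi.pow_apply]
  ring

lemma integral_integral_sub_sq (hX : MemLp X 2 μ) :
    ∫ u, ∫ v, (X v - X u) ^ 2 ∂μ ∂μ = 2 * Var[X; μ] := by
  have hdev : Integrable (fun u => (μ[X] - X u) ^ 2) μ := ((memLp_const _).sub hX).integrable_sq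
  simp_rw [integral_sub_const_sq hX]
  rw [integral_add (integrable_const _) hdev, integral_const, probReal_univ, one_smul]
  simp_rw [sub_sq_comm μ[X]]
  rw [variance_eq_integral hX.aemeasurable, two_mul]

lemma variance_le_variance_of_sq_sub_le (hX : MemLp X 2 μ) (hY : MemLp Y 2 μ)
    (h : ∀ᵐ u ∂μ, ∀ᵐ v ∂μ, (X v - X u) ^ 2 ≤ (Y v - Y u) ^ 2) :
    Var[X; μ] ≤ Var[Y; μ] := by
  have hint : ∀ {Z : Ω → ℝ}, MemLp Z 2 μ → Integrable (fun u => ∫ v, (Z v - Z u) ^ 2 ∂μ) μ := by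
    intro Z hZ
    simp_rw [integral_sub_const_sq hZ]
    exact (integrable_const _).add ((memLp_const _).sub hZ).integrable_sq
  have hmono : ∫ u, ∫ v, (X v - X u) ^ 2 ∂μ ∂μ ≤ ∫ u, ∫ v, (Y v - Y u) ^ 2 ∂μ ∂μ := by
    refine integral_mono_ae (hint hX) (hint hY) ?_
    filter_upwards [h] with u hu
    exact integral_mono_ae (hX.sub (memLp_const _)).integrable_sq
      (hY.sub (memLp_const _)).integrable_sq hu
  rw [integral_integral_sub_sq hX, integral_integral_sub_sq hY] at hmono
  linarith

end Variance

section SpreadOrder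

variable {α : Type*} [LinearOrder α] {f g : α → ℝ} {s : Set α}

/-- The spread order `g ≥ₛ f`, restricted to increments inside `s`. -/
def SpreadLE (f g : α → ℝ) (s : Set α) : Prop :=
  ∀ u ∈ s, ∀ v ∈ s, u < v → f v - f u ≤ g v - g u

lemma SpreadLE.monotoneOn (h : SpreadLE f g s) (hf : MonotoneOn f s) : MonotoneOn g s := by
  intro u hu v hv huv
  rcases huv.lt_or_eq with huv | rfl
  · linarith [hf hu hv huv.le, h u hu v hv huv]
  · rfl

lemma SpreadLE.sq_sub_le (h : SpreadLE f g s) (hf : MonotoneOn f s) {u v : α} (hu : u ∈ s)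
    (hv : v ∈ s) : (f v - f u) ^ 2 ≤ (g v - g u) ^ 2 := by
  rcases lt_trichotomy u v with huv | rfl | hvu
  · exact pow_le_pow_left₀ (sub_nonneg.2 (hf hu hv huv.le)) (h u hu v hv huv) 2
  · simp
  · rw [sub_sq_comm (f v), sub_sq_comm (g v)]
    exact pow_le_pow_left₀ (sub_nonneg.2 (hf hv hu hvu.le)) (h v hv u hu hvu) 2

end SpreadOrder

noncomputable def quantile (F : ℝ → ℝ) (u : ℝ) : ℝ := sInf {x | u ≤ F x}

lemma monotoneOn_quantile {F : ℝ → ℝ} (hF : Monotone F) (hF0 : Tendsto F atBot (nhds 0))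
    (hF1 : Tendsto F atTop (nhds 1)) : MonotoneOn (quantile F) (Ioo 0 1) := by
  intro u hu v hv huv
  obtain ⟨x₀, hx₀⟩ := (hF0.eventually (eventually_lt_nhds hu.1)).exists
  obtain ⟨x₁, hx₁⟩ := (hF1.eventually (eventually_gt_nhds hv.2)).exists
  refine csInf_le_csInf ⟨x₀, fun x hx => ?_⟩ ⟨x₁, hx₁.le⟩ fun x hx => huv.trans hx
  by_contra! hxx₀
  exact (show u ≤ F x₀ from hx.trans (hF hxx₀.le)).not_gt hx₀

instance : IsProbabilityMeasure (volume.restrict (Ioo (0 : ℝ) 1)) := ⟨by simp⟩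

lemma memLp_two_restrict_Ioo_of_monotoneOn {f : ℝ → ℝ} {a b : ℝ} (hab : a ≤ b)
    (hf : MonotoneOn f (Ioo a b)) (hf2 : IntervalIntegrable (fun u => f u ^ 2) volume a b) :
    MemLp f 2 (volume.restrict (Ioo a b)) :=
  (memLp_two_iff_integrable_sq
    (aemeasurable_restrict_of_monotoneOn measurableSet_Ioo hf).aestronglyMeasurable).2
    ((intervalIntegrable_iff_integrableOn_Ioo_of_le hab).1 hf2)

lemma intervalIntegral_sq_sub_sq_eq_variance {f : ℝ → ℝ}
    (hf : MemLp f 2 (volume.restrict (Ioo (0 : ℝ) 1))) :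
    (∫ u in (0 : ℝ)..1, f u ^ 2) - (∫ u in (0 : ℝ)..1, f u) ^ 2 =
      Var[f; volume.restrict (Ioo (0 : ℝ) 1)] := by
  simp only [variance_eq_sub hf, intervalIntegral.integral_of_le zero_le_one,
    integral_Ioc_eq_integral_Ioo, Pi.pow_apply]

theorem variance_mono_of_spread_order_general
    (F : ℝ → ℝ)
    (hFmono : Monotone F)
    (hF0 : Filter.Tendsto F Filter.atBot (nhds 0))
    (hF1 : Filter.Tendsto F Filter.atTop (nhds 1))
    (Finv Ginv : ℝ → ℝ)
    (hFinv : ∀ u, Finv u = sInf {x : ℝ | u ≤ F x})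
    -- finite second moments
    (hFint2 : IntervalIntegrable (fun u => (Finv u) ^ 2) volume 0 1)
    (hGint2 : IntervalIntegrable (fun u => (Ginv u) ^ 2) volume 0 1)
    -- spread order: G ≥_s F
    (hspread : ∀ u v : ℝ, 0 < u → u < v → v < 1 →
      Finv v - Finv u ≤ Ginv v - Ginv u) :
    (∫ u in (0:ℝ)..1, (Finv u) ^ 2) - (∫ u in (0:ℝ)..1, Finv u) ^ 2 ≤
      (∫ u in (0:ℝ)..1, (Ginv u) ^ 2) - (∫ u in (0:ℝ)..1, Ginv u) ^ 2 := by
  have hFm : MonotoneOn Finv (Ioo 0 1) := by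
    rw [show Finv = quantile F from funext hFinv]
    exact monotoneOn_quantile hFmono hF0 hF1
  have hFG : SpreadLE Finv Ginv (Ioo 0 1) := fun u hu v hv huv => hspread u v hu.1 huv hv.2
  have hF : MemLp Finv 2 (volume.restrict (Ioo 0 1)) :=
    memLp_two_restrict_Ioo_of_monotoneOn zero_le_one hFm hFint2
  have hG : MemLp Ginv 2 (volume.restrict (Ioo 0 1)) :=
    memLp_two_restrict_Ioo_of_monotoneOn zero_le_one (hFG.monotoneOn hFm) hGint2
  rw [intervalIntegral_sq_sub_sq_eq_variance hF, intervalIntegral_sq_sub_sq_eq_variance hG]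
  refine variance_le_variance_of_sq_sub_le hF hG ?_
  filter_upwards [ae_restrict_mem measurableSet_Ioo] with u hu
  filter_upwards [ae_restrict_mem measurableSet_Ioo] with v hv
  exact hFG.sq_sub_le hFm hu hv

/-- If `G` is at least as spread out as `F` (quantiles at least as far apart),
then the variance of `G` is at least the variance of `F`. -/
theorem variance_mono_of_spread_order
    (F G : ℝ → ℝ)
    (hFmono : Monotone F) (hGmono : Monotone G)
    (hFrc : ∀ x, ContinuousWithinAt F (Ici x) x)
    (hGrc : ∀ x, ContinuousWithinAt G (Ici x) x)
    (hF0 : Filter.Tendsto F Filter.atBot (nhds 0))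
    (hF1 : Filter.Tendsto F Filter.atTop (nhds 1))
    (hG0 : Filter.Tendsto G Filter.atBot (nhds 0))
    (hG1 : Filter.Tendsto G Filter.atTop (nhds 1))
    (Finv Ginv : ℝ → ℝ)
    (hFinv : ∀ u, Finv u = sInf {x : ℝ | u ≤ F x})
    (hGinv : ∀ u, Ginv u = sInf {x : ℝ | u ≤ G x})
    -- finite second moments
    (hFint2 : IntervalIntegrable (fun u => (Finv u) ^ 2) volume 0 1)
    (hGint2 : IntervalIntegrable (fun u => (Ginv u) ^ 2) volume 0 1)
    -- spread order: G ≥_s F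
    (hspread : ∀ u v : ℝ, 0 < u → u < v → v < 1 →
      Finv v - Finv u ≤ Ginv v - Ginv u) :
    (∫ u in (0:ℝ)..1, (Finv u) ^ 2) - (∫ u in (0:ℝ)..1, Finv u) ^ 2 ≤
      (∫ u in (0:ℝ)..1, (Ginv u) ^ 2) - (∫ u in (0:ℝ)..1, Ginv u) ^ 2 :=
  variance_mono_of_spread_order_general F hFmono hF0 hF1 Finv Ginv hFinv hFint2 hGint2 hspread
end

section
/- Vitali's theorem: Let (X, μ) be a measure space, 0 < p < ∞, and let f_n, f be measurable functions with f_n → f μ-almost everywhere. If limsup_n ∫ |f_n|^p dμ ≤ ∫ |f|^p dμ < ∞, then ∫ |f_n − f|^p dμ → 0. -/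
/-! With `dₙ = |fₙ - g|ᵖ` and `Gₙ = 2ᵖ (|fₙ|ᵖ + |g|ᵖ)` we have `dₙ ≤ Gₙ`, `dₙ → 0` and
`Gₙ → G = 2ᵖ⁺¹ |g|ᵖ` a.e., and `limsup ∫ Gₙ ≤ ∫ G < ∞`. Fatou's lemma applied to `Gₙ - dₙ ≥ 0`
gives `∫ G ≤ liminf ∫ (Gₙ - dₙ)`, hence `limsup ∫ dₙ + ∫ G ≤ limsup ∫ Gₙ ≤ ∫ G`, and since
`∫ G` is finite, `limsup ∫ dₙ = 0`. -/

open MeasureTheory Filter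
open scoped ENNReal Topology

lemma ENNReal.le_limsup_add {ι : Type*} {l : Filter ι} [l.NeBot] {u v : ι → ℝ≥0∞} :
    limsup u l + liminf v l ≤ limsup (fun i ↦ u i + v i) l := by
  rcases eq_or_ne (limsup u l) 0 with hu | hu
  · rw [hu, zero_add]
    exact (liminf_le_limsup (f := l)).trans (limsup_le_limsup (.of_forall fun _ ↦ le_add_self))
  rcases eq_or_ne (liminf v l) 0 with hv | hv
  · rw [hv, add_zero]
    exact limsup_le_limsup (.of_forall fun _ ↦ le_self_add)
  refine le_of_forall_lt fun c hc ↦ ?_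
  obtain ⟨a, ha, b, hb, hab⟩ := exists_lt_add_of_lt_add hc hu hv
  refine hab.trans_le (le_limsup_of_frequently_le ?_)
  exact ((frequently_lt_of_lt_limsup (by isBoundedDefault) ha).and_eventually
    (eventually_lt_of_lt_liminf hb)).mono fun _ h ↦ (ENNReal.add_lt_add h.1 h.2).le

namespace MeasureTheory

variable {α E : Type*} [MeasurableSpace α] {μ : Measure α} [NormedAddCommGroup E]

theorem tendsto_lintegral_zero_of_le_of_limsup_lintegral_le {ι : Type*} {l : Filter ι}
    [l.NeBot] [l.IsCountablyGenerated] {d G : ι → α → ℝ≥0∞} {g : α → ℝ≥0∞}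
    (hd : ∀ i, AEMeasurable (d i) μ) (hG : ∀ i, AEMeasurable (G i) μ)
    (hdG : ∀ i, d i ≤ᵐ[μ] G i)
    (hd_lim : ∀ᵐ x ∂μ, Tendsto (d · x) l (𝓝 0))
    (hG_lim : ∀ᵐ x ∂μ, Tendsto (G · x) l (𝓝 (g x)))
    (hg_fin : ∫⁻ x, g x ∂μ ≠ ∞)
    (hG_limsup : limsup (fun i ↦ ∫⁻ x, G i x ∂μ) l ≤ ∫⁻ x, g x ∂μ) :
    Tendsto (fun i ↦ ∫⁻ x, d i x ∂μ) l (𝓝 0) := by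
  have fatou : ∫⁻ x, g x ∂μ ≤ liminf (fun i ↦ ∫⁻ x, G i x - d i x ∂μ) l := calc
    ∫⁻ x, g x ∂μ = ∫⁻ x, liminf (fun i ↦ G i x - d i x) l ∂μ := by
      refine lintegral_congr_ae ?_
      filter_upwards [hd_lim, hG_lim] with x hdx hGx
      simpa using ((ENNReal.Tendsto.sub hGx hdx (Or.inr ENNReal.zero_ne_top)).liminf_eq).symm
    _ ≤ _ := lintegral_liminf_le' fun i ↦ (hG i).sub (hd i)
  have split (i : ι) : ∫⁻ x, d i x ∂μ + ∫⁻ x, G i x - d i x ∂μ = ∫⁻ x, G i x ∂μ := by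
    rw [← lintegral_add_left' (hd i)]
    exact lintegral_congr_ae <| (hdG i).mono fun x hx ↦ add_tsub_cancel_of_le hx
  have key : limsup (fun i ↦ ∫⁻ x, d i x ∂μ) l + ∫⁻ x, g x ∂μ ≤ 0 + ∫⁻ x, g x ∂μ := calc
    _ ≤ limsup (fun i ↦ ∫⁻ x, d i x ∂μ) l + liminf (fun i ↦ ∫⁻ x, G i x - d i x ∂μ) l := by
      gcongr
    _ ≤ limsup (fun i ↦ ∫⁻ x, d i x ∂μ + ∫⁻ x, G i x - d i x ∂μ) l := ENNReal.le_limsup_add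
    _ = limsup (fun i ↦ ∫⁻ x, G i x ∂μ) l := by simp only [split]
    _ ≤ 0 + ∫⁻ x, g x ∂μ := by rwa [zero_add]
  exact tendsto_of_le_liminf_of_limsup_le zero_le (ENNReal.le_of_add_le_add_right hg_fin key)

theorem tendsto_lintegral_enorm_sub_rpow_of_limsup_le {ι : Type*} {l : Filter ι}
    [l.NeBot] [l.IsCountablyGenerated] {p : ℝ} (hp : 0 < p) {f : ι → α → E} {g : α → E}
    (hf : ∀ i, AEStronglyMeasurable (f i) μ) (hg : AEStronglyMeasurable g μ)
    (hfg : ∀ᵐ x ∂μ, Tendsto (f · x) l (𝓝 (g x)))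
    (hg_fin : ∫⁻ x, ‖g x‖ₑ ^ p ∂μ ≠ ∞)
    (h_limsup : limsup (fun i ↦ ∫⁻ x, ‖f i x‖ₑ ^ p ∂μ) l ≤ ∫⁻ x, ‖g x‖ₑ ^ p ∂μ) :
    Tendsto (fun i ↦ ∫⁻ x, ‖f i x - g x‖ₑ ^ p ∂μ) l (𝓝 0) := by
  have hC : (2 : ℝ≥0∞) ^ p ≠ ∞ := ENNReal.rpow_ne_top_of_nonneg hp.le ENNReal.ofNat_ne_top
  have hg_meas : AEMeasurable (fun x ↦ ‖g x‖ₑ ^ p) μ := hg.enorm.pow_const p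
  have lintegral_bound (F : α → ℝ≥0∞) :
      ∫⁻ x, 2 ^ p * (F x + ‖g x‖ₑ ^ p) ∂μ = 2 ^ p * (∫⁻ x, F x ∂μ + ∫⁻ x, ‖g x‖ₑ ^ p ∂μ) := by
    rw [lintegral_const_mul' _ _ hC, lintegral_add_right' _ hg_meas]
  refine tendsto_lintegral_zero_of_le_of_limsup_lintegral_le
    (G := fun i x ↦ 2 ^ p * (‖f i x‖ₑ ^ p + ‖g x‖ₑ ^ p))
    (g := fun x ↦ 2 ^ p * (‖g x‖ₑ ^ p + ‖g x‖ₑ ^ p))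
    (fun i ↦ ((hf i).sub hg).enorm.pow_const p)
    (fun i ↦ (((hf i).enorm.pow_const p).add hg_meas).const_mul _)
    (fun i ↦ ae_of_all _ fun x ↦ ?_) ?_ ?_ ?_ ?_
  · calc ‖f i x - g x‖ₑ ^ p ≤ (‖f i x‖ₑ + ‖g x‖ₑ) ^ p :=
          ENNReal.rpow_le_rpow enorm_sub_le hp.le
      _ ≤ 2 ^ p * (‖f i x‖ₑ ^ p + ‖g x‖ₑ ^ p) :=
          ENNReal.add_rpow_le_two_rpow_mul_rpow_add_rpow _ _ hp.le
  · filter_upwards [hfg] with x hx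
    have := (tendsto_sub_nhds_zero_iff.2 hx).enorm.ennrpow_const p
    rwa [enorm_zero, ENNReal.zero_rpow_of_pos hp] at this
  · filter_upwards [hfg] with x hx
    exact ENNReal.Tendsto.const_mul ((hx.enorm.ennrpow_const p).add tendsto_const_nhds)
      (Or.inr hC)
  · rw [lintegral_bound]
    exact ENNReal.mul_ne_top hC (ENNReal.add_ne_top.2 ⟨hg_fin, hg_fin⟩)
  · simp only [lintegral_bound]
    rw [ENNReal.limsup_const_mul_of_ne_top hC, limsup_add_const _ _ _ (by isBoundedDefault)
      (by isBoundedDefault)]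
    gcongr

end MeasureTheory

lemma ENNReal.ofReal_abs_rpow (x : ℝ) {p : ℝ} (hp : 0 ≤ p) :
    ENNReal.ofReal (|x| ^ p) = ‖x‖ₑ ^ p := by
  rw [Real.enorm_eq_ofReal_abs, ENNReal.ofReal_rpow_of_nonneg (abs_nonneg x) hp]

/-- Vitali's theorem: a.e. convergence together with `limsup ∫|fₙ|ᵖ ≤ ∫|f|ᵖ < ∞`
implies convergence in `Lᵖ` (i.e. `∫|fₙ − f|ᵖ → 0`). -/
theorem vitali_convergence
    {X : Type*} [MeasurableSpace X] (μ : Measure X)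
    (p : ℝ) (hp : 0 < p)
    (f : ℕ → X → ℝ) (g : X → ℝ)
    (hf : ∀ n, Measurable (f n)) (hg : Measurable g)
    (hae : ∀ᵐ x ∂μ, Tendsto (fun n => f n x) atTop (nhds (g x)))
    (hfin : ∫⁻ x, ENNReal.ofReal (|g x| ^ p) ∂μ < ⊤)
    (hlimsup : limsup (fun n => ∫⁻ x, ENNReal.ofReal (|f n x| ^ p) ∂μ) atTop
      ≤ ∫⁻ x, ENNReal.ofReal (|g x| ^ p) ∂μ) :
    Tendsto (fun n => ∫⁻ x, ENNReal.ofReal (|f n x - g x| ^ p) ∂μ) atTop (nhds 0) := by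
  simp only [ENNReal.ofReal_abs_rpow _ hp.le] at hfin hlimsup ⊢
  exact tendsto_lintegral_enorm_sub_rpow_of_limsup_le hp (fun n ↦ (hf n).aestronglyMeasurable)
    hg.aestronglyMeasurable hae hfin.ne hlimsup
end

section
/- Perturbation of a distribution function: Let F be a distribution function on ℝ, t ∈ ℝ, and 0 ≤ ε ≤ 1. Then F_ε defined by F_ε(x) = F(x) − ε·(F(x ∧ t) − F(x)·F(t)) is again a distribution function (monotone nondecreasing, right-continuous, tending to 0 at −∞ and to 1 at +∞), and F_0 = F. -/
/-!
On `(-∞, t]` the perturbation is `(1 - ε (1 - F t)) F` and on `[t, ∞)` it is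
`(1 + ε F t) F - ε F t`: on each side an affine function of `F` with nonnegative slope,
the two pieces agreeing at `t`. Monotonicity, right-continuity and the limits at `±∞`
are therefore inherited from `F`.
-/

open Set Filter Topology

noncomputable def perturbCDF (F : ℝ → ℝ) (t ε x : ℝ) : ℝ :=
  F x - ε * (F (min x t) - F x * F t)

section perturbCDF

variable {F : ℝ → ℝ} {t ε x : ℝ}

theorem perturbCDF_of_le (hx : x ≤ t) :
    perturbCDF F t ε x = (1 - ε * (1 - F t)) * F x := by
  rw [perturbCDF, min_eq_left hx]
  ring

theorem perturbCDF_of_ge (hx : t ≤ x) :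
    perturbCDF F t ε x = (1 + ε * F t) * F x - ε * F t := by
  rw [perturbCDF, min_eq_right hx]
  ring

theorem monotone_perturbCDF (hF : Monotone F) (ht₀ : 0 ≤ F t) (hε₀ : 0 ≤ ε)
    (hε₁ : ε ≤ 1) : Monotone (perturbCDF F t ε) := by
  refine MonotoneOn.Iic_union_Ici (a := t) ?_ ?_
  · intro a ha b hb hab
    have hslope : 0 ≤ 1 - ε * (1 - F t) := by linarith [mul_nonneg hε₀ ht₀]
    rw [perturbCDF_of_le ha, perturbCDF_of_le hb]
    exact mul_le_mul_of_nonneg_left (hF hab) hslope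
  · intro a ha b hb hab
    have hslope : 0 ≤ 1 + ε * F t := by positivity
    rw [perturbCDF_of_ge ha, perturbCDF_of_ge hb]
    exact sub_le_sub_right (mul_le_mul_of_nonneg_left (hF hab) hslope) _

theorem continuousWithinAt_perturbCDF (hF : ∀ x, ContinuousWithinAt F (Ici x) x) :
    ContinuousWithinAt (perturbCDF F t ε) (Ici x) x := by
  have hFmin : ContinuousWithinAt (fun y ↦ F (min y t)) (Ici x) x :=
    (hF (min x t)).comp (f := fun y ↦ min y t)
      (continuous_id.min continuous_const).continuousWithinAt fun _ hy ↦ min_le_min_right t hy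
  exact (hF x).sub <|
    continuousWithinAt_const.mul (hFmin.sub ((hF x).mul continuousWithinAt_const))

theorem tendsto_perturbCDF_atBot (hF : Tendsto F atBot (𝓝 0)) :
    Tendsto (perturbCDF F t ε) atBot (𝓝 0) := by
  have hlim : Tendsto (fun x ↦ (1 - ε * (1 - F t)) * F x) atBot (𝓝 0) := by
    simpa using hF.const_mul (1 - ε * (1 - F t))
  refine hlim.congr' ?_
  filter_upwards [eventually_le_atBot t] with x hx
  rw [perturbCDF_of_le hx]

theorem tendsto_perturbCDF_atTop (hF : Tendsto F atTop (𝓝 1)) :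
    Tendsto (perturbCDF F t ε) atTop (𝓝 1) := by
  have hlim : Tendsto (fun x ↦ (1 + ε * F t) * F x - ε * F t) atTop (𝓝 1) := by
    simpa using (hF.const_mul (1 + ε * F t)).sub_const (ε * F t)
  refine hlim.congr' ?_
  filter_upwards [eventually_ge_atTop t] with x hx
  rw [perturbCDF_of_ge hx]

theorem perturbCDF_zero (F : ℝ → ℝ) (t : ℝ) : perturbCDF F t 0 = F := by
  funext x
  simp [perturbCDF]

end perturbCDF

/-- The perturbation `F_ε(x) = F(x) − ε(F(x ∧ t) − F(x)F(t))` of a distribution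
function `F` is again a distribution function, and `F_0 = F`. -/
theorem perturbed_cdf_is_cdf
    (F : ℝ → ℝ)
    (hmono : Monotone F)
    (hrc : ∀ x, ContinuousWithinAt F (Ici x) x)
    (h0 : Tendsto F atBot (nhds 0))
    (h1 : Tendsto F atTop (nhds 1))
    (t : ℝ) (ε : ℝ) (hε0 : 0 ≤ ε) (hε1 : ε ≤ 1)
    (Fe : ℝ → ℝ)
    (hFe : ∀ x, Fe x = F x - ε * (F (min x t) - F x * F t)) :
    Monotone Fe ∧ (∀ x, ContinuousWithinAt Fe (Ici x) x) ∧
      Tendsto Fe atBot (nhds 0) ∧ Tendsto Fe atTop (nhds 1) ∧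
      (ε = 0 → Fe = F) := by
  obtain rfl : Fe = perturbCDF F t ε := funext hFe
  refine ⟨monotone_perturbCDF hmono (hmono.le_of_tendsto h0 t) hε0 hε1,
    fun _ ↦ continuousWithinAt_perturbCDF hrc, tendsto_perturbCDF_atBot h0,
    tendsto_perturbCDF_atTop h1, ?_⟩
  rintro rfl
  exact perturbCDF_zero F t
end

section
/- Trigonometric spread bound: If G is an absolutely continuous distribution function on ℝ with density g satisfying g(G^{-1}(s)) ≤ (c·s(1−s))^{1/2} for all s ∈ (0,1), with c > 0, then for all 0 < u < v < 1, G^{-1}(v) − G^{-1}(u) ≥ K^{-1}(v) − K^{-1}(u), where K(x) = (1 + sin(√c · x))/2 for |x| ≤ π/(2√c), i.e. K^{-1}(s) = (1/√c)·arcsin(2s − 1). -/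
/-!
`K⁻¹ ∘ G` is absolutely continuous on `[G⁻¹(u), G⁻¹(v)]`, so `K⁻¹(v) - K⁻¹(u)` is the integral
of its a.e. derivative `g(z) / √(c G(z) (1 - G(z)))`. By Lebesgue differentiation `G' = g` a.e.,
and at such a point `z` either `g(z) = 0`, or `z = G⁻¹(G(z))` since otherwise `G` is flat just to
the left of `z`. In both cases the hypothesis bounds the derivative by `1`, and integrating gives
`K⁻¹(v) - K⁻¹(u) ≤ G⁻¹(v) - G⁻¹(u)`.
-/

open MeasureTheory Set Filter Topology

section Quantile

variable {G : ℝ → ℝ} {a b s : ℝ}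

lemma bddBelow_setOf_le_of_tendsto_atBot (hG : Tendsto G atBot (𝓝 a)) (hs : a < s) :
    BddBelow {x | s ≤ G x} := by
  obtain ⟨x₀, hx₀⟩ := eventually_atBot.1 (hG.eventually (gt_mem_nhds hs))
  exact ⟨x₀, fun x hx => le_of_not_ge fun hxx₀ => (hx₀ x hxx₀).not_ge hx⟩

lemma apply_sInf_setOf_le_eq (hG : Continuous G) (hbot : Tendsto G atBot (𝓝 a))
    (htop : Tendsto G atTop (𝓝 b)) (has : a < s) (hsb : s < b) :
    G (sInf {x | s ≤ G x}) = s := by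
  have hbdd := bddBelow_setOf_le_of_tendsto_atBot hbot has
  have hne : {x | s ≤ G x}.Nonempty := ((htop.eventually (lt_mem_nhds hsb)).exists).imp
    fun _ h => h.le
  set Q := sInf {x | s ≤ G x}
  refine le_antisymm (le_of_not_gt fun hlt => ?_)
    ((isClosed_le continuous_const hG).csInf_mem hne hbdd)
  obtain ⟨y, hsy, hy⟩ := (((hG.tendsto Q).eventually (lt_mem_nhds hlt)).filter_mono
    (nhdsWithin_le_nhds (s := Iio Q)) |>.and self_mem_nhdsWithin).exists
  exact (csInf_le hbdd hsy.le).not_gt hy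

lemma HasDerivAt.eq_zero_of_monotoneOn_of_apply_eq {d w z : ℝ} (hd : HasDerivAt G d z)
    (hG : MonotoneOn G (Icc w z)) (hwz : w < z) (heq : G w = G z) : d = 0 := by
  have hconst : EqOn G (fun _ => G z) (Icc w z) := fun y hy =>
    le_antisymm (hG hy ⟨hwz.le, le_rfl⟩ hy.2) (heq ▸ hG ⟨le_rfl, hwz.le⟩ hy hy.1)
  exact (uniqueDiffOn_Icc hwz z ⟨hwz.le, le_rfl⟩).eq_deriv _ hd.hasDerivWithinAt
    ((hasDerivWithinAt_const z _ (G z)).congr hconst rfl)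

lemma HasDerivAt.eq_zero_or_sInf_setOf_le_eq {d z : ℝ} (hd : HasDerivAt G d z) (hG : Monotone G)
    (hbdd : BddBelow {x | G z ≤ G x}) (hQ : G (sInf {x | G z ≤ G x}) = G z) :
    d = 0 ∨ sInf {x | G z ≤ G x} = z := by
  rcases (csInf_le hbdd (le_refl (G z))).lt_or_eq with hlt | heq
  · exact .inl (hd.eq_zero_of_monotoneOn_of_apply_eq (hG.monotoneOn _) hlt hQ)
  · exact .inr heq

end Quantile

section Density

variable {g : ℝ → ℝ}

lemma integral_Iic_eq_add_intervalIntegral (hg : Integrable g) (a x : ℝ) :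
    ∫ y in Iic x, g y = (∫ y in Iic a, g y) + ∫ y in a..x, g y :=
  eq_add_of_sub_eq' (intervalIntegral.integral_Iic_sub_Iic hg.integrableOn hg.integrableOn)

lemma continuous_integral_Iic (hg : Integrable g) : Continuous fun x => ∫ y in Iic x, g y := by
  rw [funext (integral_Iic_eq_add_intervalIntegral hg 0)]
  refine continuous_const.add ?_
  exact intervalIntegral.continuous_primitive (fun _ _ => hg.intervalIntegrable) 0

lemma monotone_integral_Iic (hg : Integrable g) (hg₀ : 0 ≤ g) :
    Monotone fun x => ∫ y in Iic x, g y := fun _ _ hxy =>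
  setIntegral_mono_set hg.integrableOn (ae_of_all _ fun y => hg₀ y)
    (Iic_subset_Iic.2 hxy).eventuallyLE

lemma tendsto_integral_Iic_atTop (hg : Integrable g) :
    Tendsto (fun x => ∫ y in Iic x, g y) atTop (𝓝 (∫ y, g y)) := by
  have h := (tendsto_integral_Ioi_zero (f := g) (μ := volume) tendsto_id).const_sub (∫ y, g y)
  rw [sub_zero] at h
  exact h.congr fun x =>
    (eq_sub_of_add_eq (intervalIntegral.integral_Iic_add_Ioi hg.integrableOn hg.integrableOn)).symm

lemma ae_hasDerivAt_integral_Iic (hg : Integrable g) :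
    ∀ᵐ x, HasDerivAt (fun x => ∫ y in Iic x, g y) (g x) x := by
  filter_upwards [LocallyIntegrable.ae_hasDerivAt_integral hg.locallyIntegrable] with x hx
  rw [funext (integral_Iic_eq_add_intervalIntegral hg 0)]
  exact (hx 0).const_add _

lemma absolutelyContinuousOnInterval_integral_Iic (hg : Integrable g) (a b : ℝ) :
    AbsolutelyContinuousOnInterval (fun x => ∫ y in Iic x, g y) a b := by
  rw [funext (integral_Iic_eq_add_intervalIntegral hg a)]
  exact (LipschitzWith.const _).lipschitzOnWith.absolutelyContinuousOnInterval.add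
    (hg.intervalIntegrable.absolutelyContinuousOnInterval_intervalIntegral left_mem_uIcc)

end Density

lemma LipschitzOnWith.comp_absolutelyContinuousOnInterval {X Y : Type*} [PseudoMetricSpace X]
    [PseudoMetricSpace Y] {f : X → Y} {G : ℝ → X} {K : NNReal} {s : Set X} {a b : ℝ}
    (hf : LipschitzOnWith K f s) (hG : AbsolutelyContinuousOnInterval G a b)
    (hGs : MapsTo G (uIcc a b) s) : AbsolutelyContinuousOnInterval (f ∘ G) a b := by
  rw [absolutelyContinuousOnInterval_iff] at hG ⊢
  intro ε hε
  obtain ⟨δ, hδ, hGδ⟩ := hG (ε / (K + 1)) (by positivity)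
  refine ⟨δ, hδ, fun E hE hEδ => ?_⟩
  calc ∑ i ∈ Finset.range E.1, dist (f (G (E.2 i).1)) (f (G (E.2 i).2))
      ≤ ∑ i ∈ Finset.range E.1, K * dist (G (E.2 i).1) (G (E.2 i).2) :=
        Finset.sum_le_sum fun i hi =>
          hf.dist_le_mul _ (hGs (hE.1 i hi).1) _ (hGs (hE.1 i hi).2)
    _ = K * ∑ i ∈ Finset.range E.1, dist (G (E.2 i).1) (G (E.2 i).2) := (Finset.mul_sum ..).symm
    _ ≤ K * (ε / (K + 1)) := by gcongr; exact (hGδ E hE hEδ).le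
    _ < ε := by
      rw [mul_div_assoc', div_lt_iff₀ (by positivity)]
      nlinarith

/-- The quantile function `K⁻¹` of the distribution `K(x) = (1 + sin (√c x)) / 2`. -/
noncomputable def trigonometricQuantile (c s : ℝ) : ℝ := 1 / √c * Real.arcsin (2 * s - 1)

section TrigonometricQuantile

variable {c s u v : ℝ}

lemma hasDerivAt_trigonometricQuantile (hs₀ : 0 < s) (hs₁ : s < 1) :
    HasDerivAt (trigonometricQuantile c) (√(c * (s * (1 - s))))⁻¹ s := by
  have hlin : HasDerivAt (fun s : ℝ => 2 * s - 1) 2 s := by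
    simpa using ((hasDerivAt_id s).const_mul (2 : ℝ)).sub_const (1 : ℝ)
  refine (((Real.hasDerivAt_arcsin (by linarith) (by linarith)).comp s hlin).const_mul
    (1 / √c)).congr_deriv ?_
  have hsq : √(1 - (2 * s - 1) ^ 2) = 2 * √(s * (1 - s)) := by
    rw [show 1 - (2 * s - 1) ^ 2 = 2 ^ 2 * (s * (1 - s)) by ring,
      Real.sqrt_mul (by norm_num), Real.sqrt_sq (by norm_num)]
  rw [hsq, Real.sqrt_mul' _ (mul_pos hs₀ (sub_pos.2 hs₁)).le]
  field_simp

lemma exists_lipschitzOnWith_trigonometricQuantile (hu : 0 < u) (hv : v < 1) :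
    ∃ K, LipschitzOnWith K (trigonometricQuantile c) (Icc u v) := by
  refine ContDiffOn.exists_lipschitzOnWith (n := 1) (fun s hs => ContDiffAt.contDiffWithinAt ?_)
    one_ne_zero (convex_Icc u v) isCompact_Icc
  have hs₀ : 0 < s := hu.trans_le hs.1
  have hs₁ : s < 1 := hs.2.trans_lt hv
  exact contDiffAt_const.mul ((Real.contDiffAt_arcsin (by linarith) (by linarith)).comp s
    ((contDiffAt_id.const_smul (2 : ℝ)).sub contDiffAt_const))

lemma trigonometricQuantile_comp_sub_le {G g : ℝ → ℝ} {a b : ℝ} (hab : a ≤ b) (hu : 0 < u)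
    (hv : v < 1) (hG : AbsolutelyContinuousOnInterval G a b) (hGuv : MapsTo G (Icc a b) (Icc u v))
    (hg : ∀ᵐ z, z ∈ Icc a b → HasDerivAt G (g z) z ∧ g z ≤ √(c * (G z * (1 - G z)))) :
    trigonometricQuantile c (G b) - trigonometricQuantile c (G a) ≤ b - a := by
  obtain ⟨K, hK⟩ := exists_lipschitzOnWith_trigonometricQuantile (c := c) hu hv
  have hF := hK.comp_absolutelyContinuousOnInterval hG (by rwa [uIcc_of_le hab])
  have hderiv : ∀ᵐ z ∂volume.restrict (Icc a b), deriv (trigonometricQuantile c ∘ G) z ≤ 1 := by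
    filter_upwards [ae_restrict_mem measurableSet_Icc, ae_restrict_of_ae hg] with z hz hgz
    obtain ⟨hGz, hgz⟩ := hgz hz
    have hs := hGuv hz
    rw [((hasDerivAt_trigonometricQuantile (hu.trans_le hs.1) (hs.2.trans_lt hv)).comp z hGz).deriv]
    exact inv_mul_le_one_of_le₀ hgz (Real.sqrt_nonneg _)
  calc trigonometricQuantile c (G b) - trigonometricQuantile c (G a)
      = ∫ z in a..b, deriv (trigonometricQuantile c ∘ G) z := hF.integral_deriv_eq_sub.symm
    _ ≤ ∫ _ in a..b, (1 : ℝ) := intervalIntegral.integral_mono_ae_restrict hab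
        hF.intervalIntegrable_deriv intervalIntegrable_const hderiv
    _ = b - a := by simp

end TrigonometricQuantile

theorem trigonometric_spread_bound_general
    (G : ℝ → ℝ) (g : ℝ → ℝ)
    (hg_nonneg : ∀ x, 0 ≤ g x)
    (hdensity : ∀ x, G x = ∫ y in Iic x, g y)
    (hprob : (∫ y, g y) = 1)
    (Ginv : ℝ → ℝ) (hGinv : ∀ u, Ginv u = sInf {x : ℝ | u ≤ G x})
    (c : ℝ)
    (hbound : ∀ s : ℝ, 0 < s → s < 1 →
      g (Ginv s) ≤ Real.sqrt (c * (s * (1 - s)))) :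
    ∀ u v : ℝ, 0 < u → u < v → v < 1 →
      (1 / Real.sqrt c) * (Real.arcsin (2 * v - 1) - Real.arcsin (2 * u - 1))
        ≤ Ginv v - Ginv u := by
  intro u v hu huv hv
  have hg : Integrable g := .of_integral_ne_zero (hprob ▸ one_ne_zero)
  have hG : G = fun x => ∫ y in Iic x, g y := funext hdensity
  have hmono : Monotone G := hG ▸ monotone_integral_Iic hg hg_nonneg
  have hbot : Tendsto G atBot (𝓝 0) := hG ▸ tendsto_integral_Iic_zero tendsto_id
  have htop : Tendsto G atTop (𝓝 1) := hG ▸ hprob ▸ tendsto_integral_Iic_atTop hg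
  have hGQ : ∀ s ∈ Ioo (0 : ℝ) 1, G (Ginv s) = s := fun s hs =>
    hGinv s ▸ apply_sInf_setOf_le_eq (hG ▸ continuous_integral_Iic hg) hbot htop hs.1 hs.2
  have hGu := hGQ u ⟨hu, huv.trans hv⟩
  have hGv := hGQ v ⟨hu.trans huv, hv⟩
  have hmaps : MapsTo G (Icc (Ginv u) (Ginv v)) (Icc u v) := fun z hz =>
    ⟨hGu ▸ hmono hz.1, hGv ▸ hmono hz.2⟩
  have hab : Ginv u ≤ Ginv v :=
    hGinv u ▸ csInf_le (bddBelow_setOf_le_of_tendsto_atBot hbot hu) (huv.le.trans hGv.ge)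
  have hdens : ∀ᵐ z, z ∈ Icc (Ginv u) (Ginv v) →
      HasDerivAt G (g z) z ∧ g z ≤ √(c * (G z * (1 - G z))) := by
    filter_upwards [hG ▸ ae_hasDerivAt_integral_Iic hg] with z hz hzI
    obtain ⟨hGz₀, hGz₁⟩ : 0 < G z ∧ G z < 1 :=
      ⟨hu.trans_le (hmaps hzI).1, (hmaps hzI).2.trans_lt hv⟩
    refine ⟨hz, ?_⟩
    rcases hz.eq_zero_or_sInf_setOf_le_eq hmono
      (bddBelow_setOf_le_of_tendsto_atBot hbot hGz₀) (hGinv (G z) ▸ hGQ _ ⟨hGz₀, hGz₁⟩)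
      with h₀ | hQz
    · exact h₀ ▸ Real.sqrt_nonneg _
    · simpa only [hGinv, hQz] using hbound (G z) hGz₀ hGz₁
  have key := trigonometricQuantile_comp_sub_le hab hu hv
    (hG ▸ absolutelyContinuousOnInterval_integral_Iic hg _ _) hmaps hdens
  rw [hGu, hGv] at key
  rwa [mul_sub]

/-- Trigonometric spread bound: if `g(G⁻¹(s)) ≤ √(c·s(1−s))` for all `s ∈ (0,1)`,
then `G` is at least as spread out as the trigonometric distribution with
quantile function `K⁻¹(s) = (1/√c)·arcsin(2s − 1)`. -/
theorem trigonometric_spread_bound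
    (G : ℝ → ℝ) (g : ℝ → ℝ)
    (hg_meas : Measurable g) (hg_nonneg : ∀ x, 0 ≤ g x)
    (hdensity : ∀ x, G x = ∫ y in Iic x, g y)
    (hprob : (∫ y, g y) = 1)
    (Ginv : ℝ → ℝ) (hGinv : ∀ u, Ginv u = sInf {x : ℝ | u ≤ G x})
    (c : ℝ) (hc : 0 < c)
    (hbound : ∀ s : ℝ, 0 < s → s < 1 →
      g (Ginv s) ≤ Real.sqrt (c * (s * (1 - s)))) :
    ∀ u v : ℝ, 0 < u → u < v → v < 1 →
      (1 / Real.sqrt c) * (Real.arcsin (2 * v - 1) - Real.arcsin (2 * u - 1))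
        ≤ Ginv v - Ginv u :=
  trigonometric_spread_bound_general G g hg_nonneg hdensity hprob Ginv hGinv c hbound
end
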